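/- arXiv:0712.0093 — 5 statements merged into one kernel-verified Lean document; each statement's English description precedes it below -/
import Mathlib

section
/- For every n ≥ 2, the contraction map γ : V^{⊗n} → V^{⊗(n−2)}, determined on elementary tensors by γ(v₁⊗⋯⊗vₙ) = Σ_{1 ≤ i < j ≤ n} s(v_i, v_j) · v₁⊗⋯⊗\hat{v_i}⊗⋯⊗\hat{v_j}⊗⋯⊗vₙ (where the hats denote omitted factors), vanishes on symmetrized tensors: for all v₁,…,vₙ ∈ V one has γ(Σ_{σ ∈ Sₙ} v_{σ(1)}⊗v_{σ(2)}⊗⋯⊗v_{σ(n)}) = 0. -/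
open scoped TensorProduct

/-- Let `V` be a `ℚ`-vector space and `s` an alternating bilinear form
on `V`.  For `n ≥ 2`, the contraction map `γ : V^{⊗n} → V^{⊗(n−2)}`, determined on
elementary tensors by
`γ(v₁ ⊗ ⋯ ⊗ vₙ) = Σ_{i<j} s(v_i, v_j) ⬝ v₁ ⊗ ⋯ ⊗ v̂_i ⊗ ⋯ ⊗ v̂_j ⊗ ⋯ ⊗ vₙ`
(the hats denoting omitted factors: for `i < j`, `emb i j : Fin (n−2) → Fin n` is the
strictly monotone map whose image omits exactly `i` and `j`), vanishes on symmetrized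
tensors: `γ(Σ_{σ ∈ Sₙ} v_{σ(1)} ⊗ ⋯ ⊗ v_{σ(n)}) = 0`. -/
theorem contraction_vanishes_on_symmetrized_tensors
    {V : Type*} [AddCommGroup V] [Module ℚ V]
    (s : V →ₗ[ℚ] V →ₗ[ℚ] ℚ)
    (hs_alt : ∀ v : V, s v v = 0)
    (n : ℕ) (hn : 2 ≤ n)
    (emb : Fin n → Fin n → Fin (n - 2) → Fin n)
    (hemb_mono : ∀ i j : Fin n, i < j → StrictMono (emb i j))
    (hemb_omit : ∀ i j : Fin n, i < j → ∀ k : Fin (n - 2),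
      emb i j k ≠ i ∧ emb i j k ≠ j)
    (γ : PiTensorProduct ℚ (fun _ : Fin n => V)
          →ₗ[ℚ] PiTensorProduct ℚ (fun _ : Fin (n - 2) => V))
    (hγ : ∀ v : Fin n → V,
      γ (PiTensorProduct.tprod ℚ v)
        = ∑ p ∈ Finset.univ.filter (fun p : Fin n × Fin n => p.1 < p.2),
            s (v p.1) (v p.2) •
              PiTensorProduct.tprod ℚ (fun k => v (emb p.1 p.2 k)))
    (v : Fin n → V) :
    γ (∑ σ : Equiv.Perm (Fin n), PiTensorProduct.tprod ℚ (fun i => v (σ i))) = 0 := by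
  have hanti : ∀ a b : V, s a b = - s b a := by
    intro a b
    have h := hs_alt (a + b)
    simp only [map_add, LinearMap.add_apply, hs_alt] at h
    linarith
  rw [map_sum]
  simp only [hγ]
  rw [Finset.sum_comm]
  apply Finset.sum_eq_zero
  intro p hp
  have hlt : p.1 < p.2 := (Finset.mem_filter.mp hp).2
  have hne : p.1 ≠ p.2 := ne_of_lt hlt
  apply Finset.sum_involution
    (g := fun σ _ => σ * Equiv.swap p.1 p.2)
  · intro σ _
    have h1 : (σ * Equiv.swap p.1 p.2) p.1 = σ p.2 := by
      simp [Equiv.Perm.mul_apply]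
    have h2 : (σ * Equiv.swap p.1 p.2) p.2 = σ p.1 := by
      simp [Equiv.Perm.mul_apply]
    have h3 : (fun k => v ((σ * Equiv.swap p.1 p.2) (emb p.1 p.2 k)))
        = fun k => v (σ (emb p.1 p.2 k)) := by
      funext k
      obtain ⟨h4, h5⟩ := hemb_omit p.1 p.2 hlt k
      simp [Equiv.Perm.mul_apply, Equiv.swap_apply_of_ne_of_ne h4 h5]
    rw [h1, h2, h3, hanti (v (σ p.2)) (v (σ p.1))]
    rw [neg_smul, add_neg_cancel]
  · intro σ _ _
    intro h
    have h' : σ * Equiv.swap p.1 p.2 = σ * 1 := by rwa [mul_one]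
    exact hne (Equiv.swap_eq_one_iff.mp (mul_left_cancel h'))
  · intro σ _; exact Finset.mem_univ _
  · intro σ _
    rw [mul_assoc, Equiv.swap_mul_self, mul_one]
end

section
/- Filter the group G by its lower central series. Then the induced filtration on the group algebra coincides with the I-adic filtration: for every i ≥ 1, F_i K[G] = I^i, where F_i K[G] is the K-linear span of the products (g₁−1)(g₂−1)⋯(g_r−1) with g_t ∈ Γ_{k_t} G and k₁+⋯+k_r ≥ i. In particular, for every k ≥ 1 and every g ∈ Γ_k G one has g − 1 ∈ I^k. -/
/-!
If `p - 1 ∈ J ^ m` and `q - 1 ∈ J ^ n` for a two-sided ideal `J` of `R[G]`, the identity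
`⁅p, q⁆ - 1 = ((p - 1)(q - 1) - (q - 1)(p - 1)) (qp)⁻¹` puts `⁅p, q⁆ - 1` in `J ^ (m + n)`.
Since `{g | g - 1 ∈ J}` is a subgroup, induction gives `Γ_k G - 1 ⊆ I ^ k`, hence
`F_i ⊆ I ^ i`. Conversely, `I` is `K`-spanned by the `g - 1`, so `I = F_1`, and
`F_i · I ⊆ F_{i+1}` gives `I ^ i ⊆ F_i`.
-/

/-- The augmentation map `ε : K[G] → K`, the algebra map sending every group element
to `1`. -/
noncomputable def augmentation (K : Type*) [Field K] (G : Type*) [Group G] :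
    MonoidAlgebra K G →ₐ[K] K :=
  MonoidAlgebra.lift K K G 1

/-- The augmentation ideal `I := ker ε` of the group algebra `K[G]`. -/
noncomputable def augmentationIdeal (K : Type*) [Field K] (G : Type*) [Group G] :
    Ideal (MonoidAlgebra K G) :=
  RingHom.ker (augmentation K G)

/-- The filtration on the group algebra `K[G]` induced by the lower central series of
`G`: `F_i K[G]` is the `K`-linear span of the products `(g₁−1)⋯(g_r−1)` with
`g_t ∈ Γ_{k_t} G` and `k₁ + ⋯ + k_r ≥ i`.  (Here `Γ_k G`, with `Γ₁ G = G`, is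
`lowerCentralSeries G (k − 1)`.) -/
noncomputable def lcsFiltration (K : Type*) [Field K] (G : Type*) [Group G] (i : ℕ) :
    Submodule K (MonoidAlgebra K G) :=
  Submodule.span K
    {x : MonoidAlgebra K G | ∃ (r : ℕ) (k : Fin r → ℕ) (g : Fin r → G),
      (∀ t, 1 ≤ k t ∧ g t ∈ (⊤ : Subgroup G).lowerCentralSeries (k t - 1)) ∧
      i ≤ ∑ t, k t ∧
      x = (List.ofFn fun t => (MonoidAlgebra.of K G (g t) - 1)).prod}

open MonoidAlgebra
open scoped commutatorElement

section SubOne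

variable {R G : Type*} [Ring R] [Group G]

def subOneMemSubgroup (J : Ideal (MonoidAlgebra R G)) : Subgroup G where
  carrier := {g | of R G g - 1 ∈ J}
  one_mem' := by simp only [Set.mem_ofPred_eq, map_one, sub_self, J.zero_mem]
  mul_mem' {a b} ha hb := by
    have h : of R G (a * b) - 1 = of R G a * (of R G b - 1) + (of R G a - 1) := by
      rw [map_mul]; noncomm_ring
    simpa only [Set.mem_ofPred_eq, h] using J.add_mem (J.mul_mem_left _ hb) ha
  inv_mem' {a} ha := by
    have h : of R G a⁻¹ - 1 = -(of R G a⁻¹ * (of R G a - 1)) := by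
      rw [mul_sub, mul_one, ← map_mul, inv_mul_cancel, map_one, neg_sub]
    simpa only [Set.mem_ofPred_eq, h] using J.neg_mem (J.mul_mem_left _ ha)

@[simp]
theorem mem_subOneMemSubgroup {J : Ideal (MonoidAlgebra R G)} {g : G} :
    g ∈ subOneMemSubgroup J ↔ of R G g - 1 ∈ J :=
  Iff.rfl

theorem of_commutatorElement_sub_one (p q : G) :
    of R G ⁅p, q⁆ - 1
      = ((of R G p - 1) * (of R G q - 1) - (of R G q - 1) * (of R G p - 1)) *
          of R G (q * p)⁻¹ := by
  have h : (of R G p - 1) * (of R G q - 1) - (of R G q - 1) * (of R G p - 1)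
      = of R G (p * q) - of R G (q * p) := by
    simp only [map_mul]; noncomm_ring
  rw [h, sub_mul, ← map_mul, ← map_mul, mul_inv_cancel, map_one, commutatorElement_def]
  congr 2
  group

theorem commutatorElement_mem_subOneMemSubgroup_pow {J : Ideal (MonoidAlgebra R G)}
    [J.IsTwoSided] {m n : ℕ} {p q : G} (hp : p ∈ subOneMemSubgroup (J ^ m))
    (hq : q ∈ subOneMemSubgroup (J ^ n)) : ⁅p, q⁆ ∈ subOneMemSubgroup (J ^ (m + n)) := by
  rw [mem_subOneMemSubgroup] at hp hq ⊢
  rw [of_commutatorElement_sub_one]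
  refine Ideal.mul_mem_right _ _ (Ideal.sub_mem _ ?_ ?_)
  · rw [Ideal.IsTwoSided.pow_add]
    exact Ideal.mul_mem_mul hp hq
  · rw [add_comm, Ideal.IsTwoSided.pow_add]
    exact Ideal.mul_mem_mul hq hp

theorem lowerCentralSeries_le_subOneMemSubgroup_pow {J : Ideal (MonoidAlgebra R G)}
    [J.IsTwoSided] {S : Subgroup G} (hS : S ≤ subOneMemSubgroup J) (n : ℕ) :
    S.lowerCentralSeries n ≤ subOneMemSubgroup (J ^ (n + 1)) := by
  induction n with
  | zero => rwa [zero_add, Submodule.pow_one]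
  | succ n ih =>
    rw [Subgroup.lowerCentralSeries_succ, Subgroup.commutator_le]
    intro p hp q hq
    refine commutatorElement_mem_subOneMemSubgroup_pow (n := 1) (ih hp) ?_
    rw [Submodule.pow_one]
    exact hS hq

end SubOne

theorem Ideal.prod_ofFn_mem_pow_sum {A : Type*} [Semiring A] {J : Ideal A} [J.IsTwoSided] :
    ∀ {r : ℕ} {k : Fin r → ℕ} {x : Fin r → A}, (∀ t, x t ∈ J ^ k t) →
      (List.ofFn x).prod ∈ J ^ ∑ t, k t
  | 0, _, _, _ => by
    simp only [List.ofFn_zero, List.prod_nil, Finset.univ_eq_empty, Finset.sum_empty,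
      Submodule.pow_zero, Ideal.one_eq_top, Submodule.mem_top]
  | r + 1, k, x, hx => by
    rw [List.ofFn_succ, List.prod_cons, Fin.sum_univ_succ, Ideal.IsTwoSided.pow_add]
    exact Ideal.mul_mem_mul (hx 0) (prod_ofFn_mem_pow_sum fun t => hx t.succ)

section Augmentation

variable {K : Type*} [Field K] {G : Type*} [Group G]

@[simp]
theorem augmentation_of (g : G) : augmentation K G (of K G g) = 1 := by
  simp [augmentation]

theorem of_sub_one_mem_augmentationIdeal (g : G) : of K G g - 1 ∈ augmentationIdeal K G := by
  rw [augmentationIdeal, RingHom.mem_ker, map_sub, augmentation_of, map_one, sub_self]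

instance : (augmentationIdeal K G).IsTwoSided :=
  inferInstanceAs (RingHom.ker _).IsTwoSided

theorem of_sub_one_mem_augmentationIdeal_pow {n : ℕ} {g : G}
    (hg : g ∈ (⊤ : Subgroup G).lowerCentralSeries n) :
    of K G g - 1 ∈ augmentationIdeal K G ^ (n + 1) :=
  lowerCentralSeries_le_subOneMemSubgroup_pow
    (fun g _ => mem_subOneMemSubgroup.mpr (of_sub_one_mem_augmentationIdeal g)) n hg

theorem augmentationIdeal_restrictScalars_eq_span :
    (augmentationIdeal K G).restrictScalars K =
      Submodule.span K (Set.range fun g => of K G g - 1) := by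
  refine le_antisymm (fun x hx => ?_) (Submodule.span_le.mpr ?_)
  · have key : ∀ y : MonoidAlgebra K G, y - augmentation K G y • 1 ∈
        Submodule.span K (Set.range fun g => of K G g - 1) := by
      intro y
      induction y using MonoidAlgebra.induction_on with
      | of g =>
        rw [augmentation_of, one_smul]
        exact Submodule.subset_span ⟨g, rfl⟩
      | add y z hy hz =>
        rw [map_add, add_smul, add_sub_add_comm]
        exact Submodule.add_mem _ hy hz
      | smul c y hy =>
        rw [map_smul, smul_assoc, ← smul_sub]
        exact Submodule.smul_mem _ c hy
    simpa [show augmentation K G x = 0 from hx] using key x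
  · rintro _ ⟨g, rfl⟩
    exact of_sub_one_mem_augmentationIdeal g

theorem lcsFiltration_le_pow (i : ℕ) :
    lcsFiltration K G i ≤ (augmentationIdeal K G ^ i).restrictScalars K := by
  rw [lcsFiltration, Submodule.span_le]
  rintro _ ⟨r, k, g, hg, hi, rfl⟩
  refine Ideal.pow_le_pow_right hi (Ideal.prod_ofFn_mem_pow_sum fun t => ?_)
  simpa [Nat.sub_add_cancel (hg t).1] using of_sub_one_mem_augmentationIdeal_pow (hg t).2

theorem lcsFiltration_mul_le (i : ℕ) :
    lcsFiltration K G i * (augmentationIdeal K G).restrictScalars K ≤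
      lcsFiltration K G (i + 1) := by
  rw [augmentationIdeal_restrictScalars_eq_span, lcsFiltration, lcsFiltration,
    Submodule.span_mul_span]
  refine Submodule.span_mono ?_
  rintro _ ⟨_, ⟨r, k, g, hg, hi, rfl⟩, _, ⟨h, rfl⟩, rfl⟩
  refine ⟨r + 1, Fin.snoc k 1, Fin.snoc g h, fun t => ?_, ?_, ?_⟩
  · refine Fin.lastCases ?_ (fun t => ?_) t
    · simp
    · simpa using hg t
  · simp [Fin.sum_univ_castSucc]
    omega
  · rw [List.ofFn_succ']
    simp

theorem pow_le_lcsFiltration {i : ℕ} (hi : 1 ≤ i) :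
    (augmentationIdeal K G ^ i).restrictScalars K ≤ lcsFiltration K G i := by
  induction i, hi using Nat.le_induction with
  | base =>
    rw [Submodule.pow_one, augmentationIdeal_restrictScalars_eq_span, Submodule.span_le]
    rintro _ ⟨g, rfl⟩
    exact Submodule.subset_span ⟨1, fun _ => 1, fun _ => g, by simp, by simp, by simp⟩
  | succ i _ ih =>
    rw [Submodule.pow_succ, Submodule.restrictScalars_mul]
    exact (mul_le_mul_left ih _).trans (lcsFiltration_mul_le i)

end Augmentation

theorem lcsFiltration_eq_pow_augmentationIdeal_general
    (K : Type*) [Field K] (G : Type*) [Group G] :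
    (∀ i : ℕ, 1 ≤ i →
      lcsFiltration K G i
        = (augmentationIdeal K G ^ i).restrictScalars K) ∧
    (∀ k : ℕ, 1 ≤ k → ∀ g ∈ (⊤ : Subgroup G).lowerCentralSeries (k - 1),
      (MonoidAlgebra.of K G g - 1 : MonoidAlgebra K G)
        ∈ augmentationIdeal K G ^ k) :=
  ⟨fun _ hi => (lcsFiltration_le_pow _).antisymm (pow_le_lcsFiltration hi),
    fun k hk _ hg => by
      simpa [Nat.sub_add_cancel hk] using of_sub_one_mem_augmentationIdeal_pow hg⟩

/-- Let `K` be a field of characteristic `0` and `G` a group, filtered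
by its lower central series.  Then the induced filtration on the group algebra
coincides with the `I`-adic filtration: `F_i K[G] = I^i` for every `i ≥ 1`.  In
particular, for every `k ≥ 1` and every `g ∈ Γ_k G` one has `g − 1 ∈ I^k`. -/
theorem lcsFiltration_eq_pow_augmentationIdeal
    (K : Type*) [Field K] [CharZero K] (G : Type*) [Group G] :
    (∀ i : ℕ, 1 ≤ i →
      lcsFiltration K G i
        = (augmentationIdeal K G ^ i).restrictScalars K) ∧
    (∀ k : ℕ, 1 ≤ k → ∀ g ∈ (⊤ : Subgroup G).lowerCentralSeries (k - 1),
      (MonoidAlgebra.of K G g - 1 : MonoidAlgebra K G)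
        ∈ augmentationIdeal K G ^ k) :=
  lcsFiltration_eq_pow_augmentationIdeal_general K G
end

section
/- For all i, j ≥ 1, every g ∈ F_i G and every h ∈ F_j G, the following congruence holds in K[G]: ghg⁻¹h⁻¹ − 1 ≡ (g−1)(h−1) − (h−1)(g−1) modulo F_{i+j+1} K[G]. -/
/-- The filtration on the group algebra `K[G]` induced by a filtration `F` of the group
`G`: `F_i K[G]` is the `K`-linear span of the products `(g₁−1)⋯(g_r−1)` with
`g_t ∈ F_{k_t} G` and `k₁ + ⋯ + k_r ≥ i`. -/
noncomputable def inducedFiltration (K : Type*) [Field K] (G : Type*) [Group G]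
    (F : ℕ → Subgroup G) (i : ℕ) : Submodule K (MonoidAlgebra K G) :=
  Submodule.span K
    {x : MonoidAlgebra K G | ∃ (r : ℕ) (k : Fin r → ℕ) (g : Fin r → G),
      (∀ t, 1 ≤ k t ∧ g t ∈ F (k t)) ∧
      i ≤ ∑ t, k t ∧
      x = (List.ofFn fun t => (MonoidAlgebra.of K G (g t) - 1)).prod}

/-- Let `K` be a field of characteristic `0`, `G` a group and
`(F_i G)_{i≥1}` a filtration (N-series) of `G`.  For all `i, j ≥ 1`, `g ∈ F_i G` and
`h ∈ F_j G`, in `K[G]`: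
`ghg⁻¹h⁻¹ − 1 ≡ (g−1)(h−1) − (h−1)(g−1)  (mod F_{i+j+1} K[G])`. -/
theorem commutator_congruence_in_group_algebra
    (K : Type*) [Field K] [CharZero K] (G : Type*) [Group G]
    (F : ℕ → Subgroup G)
    (hdesc : ∀ i : ℕ, F (i + 1) ≤ F i)
    (hF1 : F 1 = ⊤)
    (hcomm : ∀ i j : ℕ, 1 ≤ i → 1 ≤ j → ⁅F i, F j⁆ ≤ F (i + j))
    (i j : ℕ) (hi : 1 ≤ i) (hj : 1 ≤ j)
    (g h : G) (hg : g ∈ F i) (hh : h ∈ F j) :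
    (MonoidAlgebra.of K G (g * h * g⁻¹ * h⁻¹) - 1)
        - ((MonoidAlgebra.of K G g - 1) * (MonoidAlgebra.of K G h - 1)
            - (MonoidAlgebra.of K G h - 1) * (MonoidAlgebra.of K G g - 1))
      ∈ inducedFiltration K G F (i + j + 1) := by
  set c : G := g * h * g⁻¹ * h⁻¹ with hc
  have hcF : c ∈ F (i + j) := by
    apply hcomm i j hi hj
    have := Subgroup.commutator_mem_commutator hg hh
    rwa [commutatorElement_def] at this
  have key : (MonoidAlgebra.of K G c - 1)
        - ((MonoidAlgebra.of K G g - 1) * (MonoidAlgebra.of K G h - 1)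
            - (MonoidAlgebra.of K G h - 1) * (MonoidAlgebra.of K G g - 1))
      = -((MonoidAlgebra.of K G c - 1) * (MonoidAlgebra.of K G (h * g) - 1)) := by
    have e1 : MonoidAlgebra.of K G c * MonoidAlgebra.of K G (h * g)
        = MonoidAlgebra.of K G g * MonoidAlgebra.of K G h := by
      rw [← map_mul, ← map_mul]
      congr 1
      rw [hc]
      group
    have e2 : MonoidAlgebra.of K G (h * g)
        = MonoidAlgebra.of K G h * MonoidAlgebra.of K G g := map_mul _ _ _
    have expand : -((MonoidAlgebra.of K G c - 1) * (MonoidAlgebra.of K G (h * g) - 1))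
        = -(MonoidAlgebra.of K G c * MonoidAlgebra.of K G (h * g))
          + MonoidAlgebra.of K G c + MonoidAlgebra.of K G (h * g) - 1 := by noncomm_ring
    rw [expand, e1, e2]
    noncomm_ring
  rw [key]
  apply Submodule.neg_mem
  apply Submodule.subset_span
  refine ⟨2, ![i + j, 1], ![c, h * g], ?_, ?_, ?_⟩
  · intro t
    fin_cases t
    · exact ⟨le_trans hi (Nat.le_add_right i j), hcF⟩
    · exact ⟨le_refl 1, by show h * g ∈ F 1; rw [hF1]; trivial⟩
  · simp [Fin.sum_univ_two]
  · simp [List.ofFn_succ, mul_assoc]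
end

section
/- Let G be a torsion-free nilpotent group, i.e. a nilpotent group in which the only element of finite order is the identity. Then roots in G are unique: for every integer n ≥ 1 and all x, y ∈ G, if xⁿ = yⁿ then x = y. Consequently, a torsion-free nilpotent group which is divisible (every element has a k-th root for every k ≥ 1) is uniquely divisible: for every y ∈ G and k ≥ 1 there is a unique x ∈ G with x^k = y. -/
/-!
If `x ^ n = y ^ n`, then `y x y⁻¹` and `x` have the same `n`-th power and both lie in the
subgroup `H = ⟨x⟩ [G, G]`. Modulo `[[G, G], G]` the commutator subgroup is central, so `H` is
abelian modulo `[[G, G], G]` and its nilpotency class is smaller than that of `G`. By induction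
on the class, `y x y⁻¹ = x`; and for commuting `x`, `y` the element `x⁻¹ y` has finite order,
hence is trivial.
-/

open scoped commutatorElement

section

variable {G : Type*} [Group G]

theorem Commute.eq_of_pow_eq_pow {x y : G} (hxy : Commute x y)
    (hG : ∀ ⦃a : G⦄, a ≠ 1 → ¬IsOfFinOrder a) {n : ℕ} (hn : n ≠ 0) (h : x ^ n = y ^ n) :
    x = y := by
  rw [← inv_mul_eq_one]
  by_contra hne
  refine hG hne (isOfFinOrder_iff_pow_eq_one.2 ⟨n, Nat.pos_of_ne_zero hn, ?_⟩)
  rw [hxy.inv_left.mul_pow, inv_pow, h, inv_mul_cancel]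

namespace Subgroup

theorem commutator_zpowers_sup_le {N K : Subgroup G} [N.Normal] [K.Normal] (hNK : ⁅N, ⊤⁆ ≤ K)
    (x : G) : ⁅zpowers x ⊔ N, zpowers x ⊔ N⁆ ≤ K := by
  let π := QuotientGroup.mk' K
  have mem_iff : ∀ a b : G, ⁅a, b⁆ ∈ K ↔ Commute (π a) (π b) := fun a b => by
    rw [← commutatorElement_eq_one_iff_commute, ← map_commutatorElement, QuotientGroup.mk'_apply,
      QuotientGroup.eq_one_iff]
  have central : ∀ k ∈ N, ∀ g : G, Commute (π k) (π g) := fun k hk g =>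
    (mem_iff k g).1 (hNK (commutator_mem_commutator hk (mem_top g)))
  rw [commutator_le]
  rintro _ ha _ hb
  obtain ⟨_, ⟨i, rfl⟩, k, hk, rfl⟩ := mem_sup_of_normal_right.1 ha
  obtain ⟨_, ⟨j, rfl⟩, l, hl, rfl⟩ := mem_sup_of_normal_right.1 hb
  rw [mem_iff, map_mul]
  refine Commute.mul_left ?_ (central k hk _)
  rw [map_mul, map_zpow, map_zpow]
  exact (Commute.zpow_zpow_self (π x) i j).mul_right (central l hl _).symm

theorem lowerCentralSeries_zpowers_sup_commutator_le (x : G) (n : ℕ) :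
    (zpowers x ⊔ _root_.commutator G).lowerCentralSeries (n + 1) ≤
      (⊤ : Subgroup G).lowerCentralSeries (n + 2) := by
  induction n with
  | zero =>
    rw [← top_lowerCentralSeries_one]
    exact commutator_zpowers_sup_le le_rfl x
  | succ n ih => exact commutator_mono ih le_top

theorem isMulTorsionFree_of_lowerCentralSeries_eq_bot (c : ℕ)
    (hc : (⊤ : Subgroup G).lowerCentralSeries (c + 1) = ⊥)
    (hG : ∀ ⦃a : G⦄, a ≠ 1 → ¬IsOfFinOrder a) : IsMulTorsionFree G := by
  induction c generalizing G with
  | zero =>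
    refine ⟨fun n hn x y h => Commute.eq_of_pow_eq_pow ?_ hG hn h⟩
    rw [← commutatorElement_eq_one_iff_commute, ← mem_bot, ← hc]
    exact commutator_mem_commutator (mem_top x) (mem_top y)
  | succ c ih =>
    refine ⟨fun n hn x y (h : x ^ n = y ^ n) => Commute.eq_of_pow_eq_pow ?_ hG hn h⟩
    let H := zpowers x ⊔ _root_.commutator G
    have hH : (⊤ : Subgroup H).lowerCentralSeries (c + 1) = ⊥ := by
      rw [← map_eq_bot_iff_of_injective _ H.subtype_injective, top_subtype_lowerCentralSeries,
        eq_bot_iff, ← hc]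
      exact lowerCentralSeries_zpowers_sup_commutator_le x c
    have : IsMulTorsionFree H := ih hH fun a ha hfin =>
      hG (by simpa using ha) (Submonoid.isOfFinOrder_coe.2 hfin)
    have hx : x ∈ H := mem_sup_left (mem_zpowers x)
    have hconj : y * x * y⁻¹ ∈ H := by
      rw [show y * x * y⁻¹ = ⁅y, x⁆ * x by group]
      exact mul_mem (mem_sup_right (commutator_mem_commutator (mem_top y) (mem_top x))) hx
    have hpow : (⟨y * x * y⁻¹, hconj⟩ : H) ^ n = ⟨x, hx⟩ ^ n := by
      ext
      simp only [SubgroupClass.coe_pow, conj_pow, h]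
      group
    have := congrArg Subtype.val (IsMulTorsionFree.pow_left_injective hn hpow)
    exact (mul_inv_eq_iff_eq_mul.1 this).symm

end Subgroup

theorem Group.IsNilpotent.isMulTorsionFree_of_not_isOfFinOrder [Group.IsNilpotent G]
    (hG : ∀ ⦃a : G⦄, a ≠ 1 → ¬IsOfFinOrder a) : IsMulTorsionFree G :=
  Subgroup.isMulTorsionFree_of_lowerCentralSeries_eq_bot (Group.nilpotencyClass G)
    (Subgroup.lowerCentralSeries_eq_bot_iff_nilpotencyClass_le.2 (Nat.le_succ _)) hG

end

/-- Let `G` be a torsion-free nilpotent group.  Then roots in `G` are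
unique: for every `n ≥ 1`, `xⁿ = yⁿ` implies `x = y`.  Consequently, if `G` is moreover
divisible (every element has a `k`-th root for every `k ≥ 1`), then it is uniquely
divisible: for every `y ∈ G` and `k ≥ 1` there is a unique `x ∈ G` with `x^k = y`. -/
theorem torsionFree_nilpotent_unique_roots
    (G : Type*) [Group G] [Group.IsNilpotent G]
    (htf : ∀ x : G, ∀ n : ℕ, 1 ≤ n → x ^ n = 1 → x = 1) :
    (∀ n : ℕ, 1 ≤ n → ∀ x y : G, x ^ n = y ^ n → x = y) ∧
    ((∀ y : G, ∀ k : ℕ, 1 ≤ k → ∃ x : G, x ^ k = y) →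
      ∀ y : G, ∀ k : ℕ, 1 ≤ k → ∃! x : G, x ^ k = y) := by
  have : IsMulTorsionFree G := Group.IsNilpotent.isMulTorsionFree_of_not_isOfFinOrder
    fun a ha hfin => ha <| by
      obtain ⟨n, hn, h⟩ := isOfFinOrder_iff_pow_eq_one.1 hfin
      exact htf a n hn h
  have unique_roots : ∀ n : ℕ, 1 ≤ n → ∀ x y : G, x ^ n = y ^ n → x = y :=
    fun n hn _ _ h => IsMulTorsionFree.pow_left_injective (Nat.one_le_iff_ne_zero.1 hn) h
  refine ⟨unique_roots, fun hdiv y k hk => ?_⟩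
  obtain ⟨x, hx⟩ := hdiv y k hk
  exact ⟨x, hx, fun z hz => unique_roots k hk z x (hz.trans hx.symm)⟩
end

section
/- Let (F_iG)_{i≥1} be a filtration of a group G with F₁G = G. Then for every i ≥ 1 the radical closure √(F_iG) := {g ∈ G : ∃ k ≥ 1, g^k ∈ F_iG} is a normal subgroup of G containing F_iG, and the quotient group G/√(F_iG) is nilpotent and torsion-free. -/
/-!
Because `F₁G = G`, the filtration dominates the lower central series, `γₙ G ≤ F_{n+1}G`, so
`G / F_iG` is nilpotent, and `√(F_iG)` is the preimage of the elements of finite order of this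
quotient. These form a subgroup because a nilpotent group generated by finitely many elements of
finite order is finite: inducting on the nilpotency class, `G / Z(G)` is finite, so `G` has only
finitely many commutators and, by Schur's theorem, a finite derived subgroup, while the
abelianization is a finitely generated torsion abelian group. Torsion-freeness of `G / √(F_iG)` is
then immediate, and it is nilpotent as a quotient of `G / F_iG`.
-/

open Subgroup QuotientGroup
open scoped commutatorElement

section

variable {G : Type*} [Group G]

theorem commutatorElement_mul_mem_center_left {z : G} (hz : z ∈ center G) (a b : G) :
    ⁅a * z, b⁆ = ⁅a, b⁆ := by
  have hzb : z * b * z⁻¹ = b := by rw [← mem_center_iff.mp hz b]; group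
  calc ⁅a * z, b⁆ = a * (z * b * z⁻¹) * a⁻¹ * b⁻¹ := by rw [commutatorElement_def]; group
    _ = ⁅a, b⁆ := by rw [hzb, commutatorElement_def]

theorem commutatorElement_mul_mem_center {z w : G} (hz : z ∈ center G) (hw : w ∈ center G)
    (a b : G) : ⁅a * z, b * w⁆ = ⁅a, b⁆ := by
  rw [commutatorElement_mul_mem_center_left hz, ← commutatorElement_inv,
    commutatorElement_mul_mem_center_left hw, commutatorElement_inv]

theorem finite_commutatorSet_of_finite_quotient_center [Finite (G ⧸ center G)] :
    Finite (commutatorSet G) := by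
  refine Set.Finite.to_subtype <|
    (Set.finite_range fun p : (G ⧸ center G) × (G ⧸ center G) => ⁅p.1.out, p.2.out⁆).subset ?_
  rintro _ ⟨a, b, rfl⟩
  obtain ⟨z, hz⟩ := mk_out_eq_mul (center G) a
  obtain ⟨w, hw⟩ := mk_out_eq_mul (center G) b
  exact ⟨(a, b), by simp only [hz, hw]; exact commutatorElement_mul_mem_center z.2 w.2 a b⟩

theorem closure_image_eq_top_of_surjective {H : Type*} [Group H] {f : G →* H}
    (hf : Function.Surjective f) {S : Set G} (hS : closure S = ⊤) : closure (f '' S) = ⊤ := by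
  rw [← MonoidHom.map_closure, hS, map_top_of_surjective f hf]

theorem CommGroup.isMulTorsion_of_closure_eq_top {A : Type*} [CommGroup A] {S : Set A}
    (hS_tor : ∀ a ∈ S, IsOfFinOrder a) (hS : closure S = ⊤) : IsMulTorsion A := by
  have : closure S ≤ CommGroup.torsion A := (closure_le _).mpr hS_tor
  exact fun a => this (hS ▸ mem_top a)

theorem Group.finite_of_isNilpotent_of_closure_eq_top [Group.IsNilpotent G] {S : Set G}
    (hS : S.Finite) (hS_tor : ∀ a ∈ S, IsOfFinOrder a) (hS_gen : closure S = ⊤) : Finite G := by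
  refine nilpotent_center_quotient_ind (P := fun G _ _ => ∀ S : Set G, S.Finite →
    (∀ a ∈ S, IsOfFinOrder a) → closure S = ⊤ → Finite G) G ?_ ?_ S hS hS_tor hS_gen
  · intro G _ _ _ _ _ _
    exact Finite.of_subsingleton
  · intro G _ _ ih S hS hS_tor hS_gen
    have : Finite (G ⧸ center G) := ih _ (hS.image (mk' (center G)))
      (by rintro _ ⟨a, ha, rfl⟩; exact (mk' _).isOfFinOrder (hS_tor a ha))
      (closure_image_eq_top_of_surjective (mk'_surjective _) hS_gen)
    have : Finite (commutatorSet G) := finite_commutatorSet_of_finite_quotient_center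
    -- Schur's theorem
    have : Finite (commutator G) := inferInstance
    have : Group.FG G := Group.fg_iff.mpr ⟨S, hS_gen, hS⟩
    have : Group.FG (Abelianization G) := QuotientGroup.fg _
    have : Finite (Abelianization G) := CommGroup.finite_of_fg_isMulTorsion _ <|
      CommGroup.isMulTorsion_of_closure_eq_top
        (by rintro _ ⟨a, ha, rfl⟩; exact Abelianization.of.isOfFinOrder (hS_tor a ha))
        (closure_image_eq_top_of_surjective (mk'_surjective _) hS_gen)
    have : Finite (G ⧸ commutator G) := this
    exact Finite.of_subgroup_quotient (commutator G)

theorem IsOfFinOrder.mul_of_isNilpotent [Group.IsNilpotent G] {a b : G} (ha : IsOfFinOrder a)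
    (hb : IsOfFinOrder b) : IsOfFinOrder (a * b) := by
  have haK : a ∈ closure {a, b} := subset_closure (by simp)
  have hbK : b ∈ closure {a, b} := subset_closure (by simp)
  have : Finite (closure {a, b}) := by
    refine Group.finite_of_isNilpotent_of_closure_eq_top
      ((Set.toFinite {a, b}).preimage Subtype.coe_injective.injOn) ?_ closure_closure_coe_preimage
    rintro x (hx | hx : (x : G) = a ∨ (x : G) = b)
    all_goals rw [← Submonoid.isOfFinOrder_coe, hx]; assumption
  exact (closure {a, b}).subtype.isOfFinOrder
    (isOfFinOrder_of_finite (⟨a * b, mul_mem haK hbK⟩ : closure {a, b}))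

theorem isNilpotent_quotient_of_lowerCentralSeries_le {N : Subgroup G} [N.Normal] {n : ℕ}
    (h : (⊤ : Subgroup G).lowerCentralSeries n ≤ N) : Group.IsNilpotent (G ⧸ N) := by
  refine Subgroup.nilpotent_iff_lowerCentralSeries.mpr ⟨n, ?_⟩
  rw [← map_top_of_surjective _ (mk'_surjective N), ← map_lowerCentralSeries,
    Subgroup.map_eq_bot_iff, ker_mk']
  exact h

theorem isDescendingCentralSeries_of_filtration {F : ℕ → Subgroup G} (hF1 : F 1 = ⊤)
    (hcomm : ∀ i j : ℕ, 1 ≤ i → 1 ≤ j → ⁅F i, F j⁆ ≤ F (i + j)) :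
    Subgroup.IsDescendingCentralSeries fun n => F (n + 1) :=
  ⟨hF1, fun _ n hx g =>
    hcomm (n + 1) 1 n.succ_pos le_rfl (commutator_mem_commutator hx (hF1 ▸ mem_top g))⟩

namespace Subgroup

variable (N : Subgroup G) [N.Normal] [Group.IsNilpotent (G ⧸ N)]

/-- The radical closure `√N` of the paper, see `mem_radical_iff`. -/
def radical : Subgroup G where
  carrier := {g | IsOfFinOrder (g : G ⧸ N)}
  one_mem' := IsOfFinOrder.one
  mul_mem' ha hb := ha.mul_of_isNilpotent hb
  inv_mem' ha := ha.inv

theorem mem_radical_iff {g : G} : g ∈ N.radical ↔ ∃ k, 1 ≤ k ∧ g ^ k ∈ N := by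
  show IsOfFinOrder (g : G ⧸ N) ↔ _
  simp only [isOfFinOrder_iff_pow_eq_one, ← mk_pow, eq_one_iff]
  rfl

theorem le_radical : N ≤ N.radical :=
  fun g hg => (mem_radical_iff N).mpr ⟨1, le_rfl, by rwa [pow_one]⟩

instance radical_normal : N.radical.Normal :=
  ⟨fun _ hg h => (isConj_iff.mpr ⟨(h : G ⧸ N), rfl⟩).isOfFinOrder hg⟩

theorem eq_one_of_pow_eq_one_mod_radical {x : G ⧸ N.radical} {n : ℕ} (hn : n ≠ 0)
    (hx : x ^ n = 1) : x = 1 := by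
  induction x using QuotientGroup.induction_on with | H g => ?_
  rw [← mk_pow, eq_one_iff] at hx
  rw [eq_one_iff]
  exact (show IsOfFinOrder ((g ^ n : G) : G ⧸ N) from hx).of_pow hn

end Subgroup

end

/-- Let `(F_i G)_{i≥1}` be a filtration (N-series) of a group `G`
with `F₁ G = G`.  For every `i ≥ 1`, the radical closure
`√(F_i G) = {g ∈ G : ∃ k ≥ 1, g^k ∈ F_i G}` is a normal subgroup `R` of `G` containing
`F_i G`, and the quotient `G / R` is nilpotent and torsion-free. -/
theorem radical_closure_normal_quotient_nilpotent_torsionFree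
    (G : Type*) [Group G] (F : ℕ → Subgroup G)
    (hdesc : ∀ i : ℕ, F (i + 1) ≤ F i)
    (hF1 : F 1 = ⊤)
    (hcomm : ∀ i j : ℕ, 1 ≤ i → 1 ≤ j → ⁅F i, F j⁆ ≤ F (i + j))
    (i : ℕ) (hi : 1 ≤ i) :
    ∃ R : Subgroup G,
      (∀ g : G, g ∈ R ↔ ∃ k : ℕ, 1 ≤ k ∧ g ^ k ∈ F i) ∧
      F i ≤ R ∧
      R.Normal ∧
      ∀ [_hn : R.Normal],
        Group.IsNilpotent (G ⧸ R) ∧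
        (∀ x : G ⧸ R, ∀ n : ℕ, 1 ≤ n → x ^ n = 1 → x = 1) := by
  obtain ⟨n, rfl⟩ : ∃ n, i = n + 1 := ⟨i - 1, by omega⟩
  have hlcs : (⊤ : Subgroup G).lowerCentralSeries n ≤ F (n + 1) :=
    Subgroup.descending_central_series_ge_lower _
      (isDescendingCentralSeries_of_filtration hF1 hcomm) n
  have : (F (n + 1)).Normal := by
    rw [← commutator_top_left_le_iff, ← hF1]
    exact (hcomm 1 (n + 1) le_rfl hi).trans (add_comm (n + 1) 1 ▸ hdesc (n + 1))
  have := isNilpotent_quotient_of_lowerCentralSeries_le hlcs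
  refine ⟨(F (n + 1)).radical, fun g => mem_radical_iff _, le_radical _, inferInstance, ?_⟩
  exact ⟨isNilpotent_quotient_of_lowerCentralSeries_le (hlcs.trans (le_radical _)),
    fun x k hk hx => eq_one_of_pow_eq_one_mod_radical _ (by omega) hx⟩
end
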